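/- arXiv:2104.15058 — 4 statements merged into one kernel-verified Lean document; each statement's English description precedes it below -/
import Mathlib

section
/- Every win-based WAM and every loss-based WAM has unbounded dry spells, i.e., for no function d : ℕ → ℕ does such a rule have a dry spell guarantee of d. -/
open scoped Classical
open Finset

/-! ## The perpetual voting framework

Voters are `Fin n`; alternatives are natural numbers (the order on `ℕ` plays no
special role: tie-breaking orders are explicit parameters `tb`). -/

/-- An approval profile: each voter approves a finite set of alternatives. -/
abbrev Profile (n : ℕ) := Fin n → Finset ℕ

/-- A decision sequence for `n` voters: in round `i` (0-indexed) the set of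
alternatives is `C i` and the approval profile is `A i`; every approval set is a
nonempty subset of the current alternatives. -/
structure DecisionSeq (n : ℕ) where
  C : ℕ → Finset ℕ
  A : ℕ → Profile n
  approvalSub : ∀ i v, A i v ⊆ C i
  approvalNonempty : ∀ i v, (A i v).Nonempty

/-- A perpetual voting rule: for every number of voters and every decision
sequence it resolutely chooses one winning alternative in each round; the winner
belongs to the current set of alternatives, and it only depends on the rounds up
to (and including) the current one (the past winners are then determined as
well, since the rule is applied round by round). -/
structure PerpetualRule where
  choice : ∀ n : ℕ, DecisionSeq n → ℕ → ℕ
  choice_mem : ∀ (n : ℕ) (D : DecisionSeq n) (k : ℕ), choice n D k ∈ D.C k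
  causal : ∀ (n : ℕ) (D D' : DecisionSeq n) (k : ℕ),
    (∀ i ≤ k, D.A i = D'.A i ∧ D.C i = D'.C i) → choice n D k = choice n D' k

/-- Satisfaction of voter `v` with the first `t` rounds of the choice sequence
produced by rule `R` on `D`. -/
noncomputable def satAt (R : PerpetualRule) {n : ℕ} (D : DecisionSeq n) (v : Fin n) (t : ℕ) : ℕ :=
  ((Finset.range t).filter fun i => R.choice n D i ∈ D.A i v).card

/-- Voter `v` has a dry spell of length `l`: in some window of `l` consecutive
rounds her satisfaction does not increase. -/
def HasDrySpell (R : PerpetualRule) {n : ℕ} (D : DecisionSeq n) (v : Fin n) (l : ℕ) : Prop :=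
  ∃ t : ℕ, satAt R D v t = satAt R D v (t + l)

/-- `R` has a dry spell guarantee of `d`: on no decision sequence does any voter
have a dry spell of length `d n`. -/
def DrySpellGuarantee (R : PerpetualRule) (d : ℕ → ℕ) : Prop :=
  ∀ (n : ℕ) (D : DecisionSeq n) (v : Fin n), ¬ HasDrySpell R D v (d n)

/-- Weighted approval score of alternative `c` for weights `β`. -/
noncomputable def approvalScore {n : ℕ} (β : Fin n → ℝ) (A : Profile n) (c : ℕ) : ℝ :=
  ∑ v : Fin n, if c ∈ A v then β v else 0

/-- `c` is the alternative selected from `Cs` by maximizing the weighted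
approval score w.r.t. weights `β`, ties broken by the fixed order `tb`. -/
def SelectedBy {n : ℕ} (β : Fin n → ℝ) (A : Profile n) (Cs : Finset ℕ)
    (tb : ℕ → ℕ → Prop) (c : ℕ) : Prop :=
  c ∈ Cs ∧ (∀ c' ∈ Cs, approvalScore β A c' ≤ approvalScore β A c) ∧
    (∀ c' ∈ Cs, approvalScore β A c' = approvalScore β A c → tb c c')

/-- `R` is a weighted approval method (WAM) with tie-breaking order `tb`:
there are voter weights, initialized to `1`, depending only on the history of
previous rounds, such that in each round `R` selects a weighted-approval-score
maximizing alternative (ties broken by `tb`). -/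
def IsWAM (R : PerpetualRule) (tb : ℕ → ℕ → Prop) : Prop :=
  ∃ α : ∀ n : ℕ, DecisionSeq n → ℕ → Fin n → ℝ,
    (∀ (n : ℕ) (D : DecisionSeq n) (v : Fin n), α n D 0 v = 1) ∧
    (∀ (n : ℕ) (D D' : DecisionSeq n) (k : ℕ),
        (∀ i < k, D.A i = D'.A i ∧ D.C i = D'.C i) → α n D k = α n D' k) ∧
    ∀ (n : ℕ) (D : DecisionSeq n) (k : ℕ),
      SelectedBy (α n D k) (D.A k) (D.C k) tb (R.choice n D k)

/-- The weights of a basic WAM with update functions `f` (for losing) and `g`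
(for winning), relative to the choices of rule `R`. -/
noncomputable def basicWeight (R : PerpetualRule) (f g : ℝ → ℝ) (n : ℕ) (D : DecisionSeq n) :
    ℕ → Fin n → ℝ
  | 0 => fun _ => 1
  | k + 1 => fun v =>
      if R.choice n D k ∈ D.A k v then g (basicWeight R f g n D k v)
      else f (basicWeight R f g n D k v)

/-- `R` is the basic WAM with update functions `f`, `g` and tie-breaking `tb`. -/
def IsBasicWAMWith (R : PerpetualRule) (f g : ℝ → ℝ) (tb : ℕ → ℕ → Prop) : Prop :=
  ∀ (n : ℕ) (D : DecisionSeq n) (k : ℕ),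
    SelectedBy (basicWeight R f g n D k) (D.A k) (D.C k) tb (R.choice n D k)

/-- A win-based WAM: a basic WAM with `f = id` (and `g x ≤ x`). -/
def IsWinBasedWAM (R : PerpetualRule) (g : ℝ → ℝ) (tb : ℕ → ℕ → Prop) : Prop :=
  (∀ x : ℝ, g x ≤ x) ∧ IsBasicWAMWith R id g tb

/-- A loss-based WAM: a basic WAM with `g = id` (and `f x ≥ x`). -/
def IsLossBasedWAM (R : PerpetualRule) (f : ℝ → ℝ) (tb : ℕ → ℕ → Prop) : Prop :=
  (∀ x : ℝ, x ≤ f x) ∧ IsBasicWAMWith R f id tb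

/-- Approval voting: the basic WAM with `f = g = id`. -/
def IsAV (R : PerpetualRule) (tb : ℕ → ℕ → Prop) : Prop :=
  IsBasicWAMWith R id id tb

/-- Perpetual Reset: the basic WAM with `f x = x + 1` and `g x = 1`. -/
def IsPerpetualReset (R : PerpetualRule) (tb : ℕ → ℕ → Prop) : Prop :=
  IsBasicWAMWith R (fun x => x + 1) (fun _ => 1) tb

/-- Perpetual PAV: the win-based WAM with `g x = x / (x + 1)`, i.e. the weight of
a voter satisfied `s` times is `1 / (s + 1)`. -/
def IsPerpetualPAV (R : PerpetualRule) (tb : ℕ → ℕ → Prop) : Prop :=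
  IsBasicWAMWith R id (fun x => x / (x + 1)) tb

/-- The voter weights of Perpetual Consensus (relative to the choices of `R`). -/
noncomputable def consensusWeight (R : PerpetualRule) (n : ℕ) (D : DecisionSeq n) :
    ℕ → Fin n → ℝ
  | 0 => fun _ => 1
  | k + 1 => fun v =>
      if R.choice n D k ∈ D.A k v ∧ 0 < consensusWeight R n D k v then
        consensusWeight R n D k v + 1 -
          (n : ℝ) / ((Finset.univ.filter fun u : Fin n =>
              R.choice n D k ∈ D.A k u ∧ 0 < consensusWeight R n D k u).card : ℝ)
      else consensusWeight R n D k v + 1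

/-- `R` is Perpetual Consensus with tie-breaking order `tb`: in each round it
selects an alternative maximizing `∑_{v approving c} max 0 (α v)` for the
Perpetual Consensus weights `α`. -/
def IsPerpetualConsensus (R : PerpetualRule) (tb : ℕ → ℕ → Prop) : Prop :=
  ∀ (n : ℕ) (D : DecisionSeq n) (k : ℕ),
    SelectedBy (fun v => max 0 (consensusWeight R n D k v)) (D.A k) (D.C k) tb
      (R.choice n D k)

/-- Insert the decision instance `(A0, C0)` at position `i` (0-indexed) into `D`,
shifting all later rounds by one. -/
def DecisionSeq.insertAt {n : ℕ} (D : DecisionSeq n) (i : ℕ) (C0 : Finset ℕ)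
    (A0 : Profile n) (hsub : ∀ v, A0 v ⊆ C0) (hne : ∀ v, (A0 v).Nonempty) :
    DecisionSeq n where
  C := fun j => if j < i then D.C j else if j = i then C0 else D.C (j - 1)
  A := fun j v => if j < i then D.A j v else if j = i then A0 v else D.A (j - 1) v
  approvalSub := by
    intro j v
    try dsimp only
    split_ifs with h1 h2
    · exact D.approvalSub j v
    · exact hsub v
    · exact D.approvalSub (j - 1) v
  approvalNonempty := by
    intro j v
    try dsimp only
    split_ifs with h1 h2
    · exact D.approvalNonempty j v
    · exact hne v
    · exact D.approvalNonempty (j - 1) v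

/-- The profile `A0` is uncontroversial due to `c`: the intersection of all
approval sets is exactly `{c}`. -/
def Uncontroversial {n : ℕ} (A0 : Profile n) (c : ℕ) : Prop :=
  (∀ v, c ∈ A0 v) ∧ ∀ c', (∀ v, c' ∈ A0 v) → c' = c

/-- Independence of uncontroversial decisions: inserting an uncontroversial
decision instance at any position yields `c` in the inserted round and leaves
all other choices unchanged. -/
def SatisfiesIUD (R : PerpetualRule) : Prop :=
  ∀ (n : ℕ) (D : DecisionSeq n) (i : ℕ) (C0 : Finset ℕ) (A0 : Profile n)
    (hsub : ∀ v, A0 v ⊆ C0) (hne : ∀ v, (A0 v).Nonempty) (c : ℕ),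
    Uncontroversial A0 c →
      (∀ j < i, R.choice n (D.insertAt i C0 A0 hsub hne) j = R.choice n D j) ∧
      R.choice n (D.insertAt i C0 A0 hsub hne) i = c ∧
      ∀ j, i ≤ j → R.choice n (D.insertAt i C0 A0 hsub hne) (j + 1) = R.choice n D j

/-- A simple decision sequence: the same profile and alternatives in every
round, and every voter approves exactly one alternative. -/
def DecisionSeq.IsSimple {n : ℕ} (D : DecisionSeq n) : Prop :=
  (∀ i, D.A i = D.A 0) ∧ (∀ i, D.C i = D.C 0) ∧ ∀ v, (D.A 0 v).card = 1

/-- `#v`: the number of voters with the same approval set as `v` (in a simple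
decision sequence). -/
noncomputable def groupSize {n : ℕ} (D : DecisionSeq n) (v : Fin n) : ℕ :=
  (Finset.univ.filter fun u : Fin n => D.A 0 u = D.A 0 v).card

/-- Simple proportionality: on every simple decision sequence with `n` voters,
after `n` rounds every voter's satisfaction equals `#v`. -/
def SatisfiesSimpleProportionality (R : PerpetualRule) : Prop :=
  ∀ (n : ℕ) (D : DecisionSeq n), D.IsSimple →
    ∀ v : Fin n, satAt R D v n = groupSize D v

/-- Apportionment lower quota: on simple decision sequences, after `k` rounds
every voter has satisfaction at least `⌊k · #v / n⌋`. -/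
def SatisfiesALQ (R : PerpetualRule) : Prop :=
  ∀ (n : ℕ) (D : DecisionSeq n), D.IsSimple → ∀ (k : ℕ) (v : Fin n),
    ⌊((k : ℚ) * (groupSize D v : ℚ)) / (n : ℚ)⌋ ≤ (satAt R D v k : ℤ)

/-- Apportionment upper quota: on simple decision sequences, after `k` rounds
every voter has satisfaction at most `⌈k · #v / n⌉`. -/
def SatisfiesAUQ (R : PerpetualRule) : Prop :=
  ∀ (n : ℕ) (D : DecisionSeq n), D.IsSimple → ∀ (k : ℕ) (v : Fin n),
    (satAt R D v k : ℤ) ≤ ⌈((k : ℚ) * (groupSize D v : ℚ)) / (n : ℚ)⌉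

/-- The load each member of `N'` would carry if `N'` were selected. -/
noncomputable def newLoad {n : ℕ} (ld : Fin n → ℝ) (N' : Finset (Fin n)) : ℝ :=
  (1 + ∑ v ∈ N', ld v) / (N'.card : ℝ)

/-- `R` is Perpetual Phragmén with tie-breaking order `tb` on alternatives:
there are loads (initially `0`) and, in each round, a selected nonempty voter
set of minimal prospective load among all sets jointly approving some
alternative; the winner is jointly approved by the selected set (ties among its
jointly approved alternatives broken by `tb`) and loads are updated accordingly. -/
def IsPerpetualPhragmen (R : PerpetualRule) (tb : ℕ → ℕ → Prop) : Prop :=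
  ∃ (load : ∀ n : ℕ, DecisionSeq n → ℕ → Fin n → ℝ)
    (S : ∀ n : ℕ, DecisionSeq n → ℕ → Finset (Fin n)),
    (∀ (n : ℕ) (D : DecisionSeq n) (v : Fin n), load n D 0 v = 0) ∧
    ∀ (n : ℕ) (D : DecisionSeq n) (k : ℕ),
      (S n D k).Nonempty ∧
      (∀ v ∈ S n D k, R.choice n D k ∈ D.A k v) ∧
      (∀ N' : Finset (Fin n), N'.Nonempty → (∃ c, ∀ v ∈ N', c ∈ D.A k v) →
        newLoad (load n D k) (S n D k) ≤ newLoad (load n D k) N') ∧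
      (∀ c, (∀ v ∈ S n D k, c ∈ D.A k v) → tb (R.choice n D k) c) ∧
      ∀ v : Fin n, load n D (k + 1) v =
        if v ∈ S n D k then newLoad (load n D k) (S n D k) else load n D k v

/-- Rotating Dictator w.r.t. the enumeration `e` of the voters: in round `k`
an alternative approved by the dictator `e n (k mod n)` is chosen (the
tb-best alternative approved by the dictator). -/
def IsRotatingDictator (R : PerpetualRule) (e : ∀ n : ℕ, Equiv.Perm (Fin n))
    (tb : ℕ → ℕ → Prop) : Prop :=
  ∀ (n : ℕ) (hn : 0 < n) (D : DecisionSeq n) (k : ℕ),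
    R.choice n D k ∈ D.A k (e n ⟨k % n, Nat.mod_lt k hn⟩) ∧
    ∀ c ∈ D.A k (e n ⟨k % n, Nat.mod_lt k hn⟩), tb (R.choice n D k) c

/-- `r(x)` for the Exponential Rule: `(m+1)/2` for the smallest natural number
`m` such that `2 ^ l * x = m` for some `l ≥ 0` (and `0` if no such `m` exists;
those values are never required). -/
noncomputable def expRound (x : ℝ) : ℕ :=
  if h : ∃ m : ℕ, ∃ l : ℕ, (2 : ℝ) ^ l * x = (m : ℝ) then (Nat.find h + 1) / 2 else 0

/-- The `f`-function of the Exponential Rule. -/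
noncomputable def expF (x : ℝ) : ℝ :=
  ((2 * (expRound x : ℝ) + 1) / (2 * (expRound x : ℝ) - 1)) * x

/-- The `g`-function of the Exponential Rule. -/
noncomputable def expG (x : ℝ) : ℝ :=
  ((2 * (expRound x : ℝ) + 1) /
      ((2 : ℝ) ^ (Nat.factorial (expRound x)) * (2 * (expRound x : ℝ) - 1))) * x

/-- The Exponential Rule: the basic WAM with update functions `expF`, `expG`. -/
def IsExponentialRule (R : PerpetualRule) (tb : ℕ → ℕ → Prop) : Prop :=
  IsBasicWAMWith R expF expG tb

/-- Round `j` is dictatorial: some voter `v` approves the winner, while all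
other voters disapprove the winner and jointly approve some other alternative `c`. -/
def DictatorialRound (R : PerpetualRule) {n : ℕ} (D : DecisionSeq n) (j : ℕ) : Prop :=
  ∃ c ∈ D.C j, c ≠ R.choice n D j ∧ ∃ v : Fin n, R.choice n D j ∈ D.A j v ∧
    ∀ v' : Fin n, v' ≠ v → R.choice n D j ∉ D.A j v' ∧ c ∈ D.A j v'

/-- The weights of Frege's apportionment method on the apportionment instance
induced by a simple decision sequence `D` (party of alternative `c` has vote
share `|N(c)|/n`), with seats assigned according to the choices of rule `R`. -/
noncomputable def fregeWeight (R : PerpetualRule) (n : ℕ) (D : DecisionSeq n) :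
    ℕ → ℕ → ℝ
  | 0 => fun c => ((Finset.univ.filter fun v : Fin n => D.A 0 v = {c}).card : ℝ) / (n : ℝ)
  | t + 1 => fun c =>
      fregeWeight R n D t c +
        ((Finset.univ.filter fun v : Fin n => D.A 0 v = {c}).card : ℝ) / (n : ℝ) -
        if R.choice n D t = c then 1 else 0

/-! In a win-based WAM the weight of a voter is `g^[s] 1`, where `s` is her satisfaction so far;
in a loss-based WAM it is `f^[ℓ] 1`, where `ℓ` is her number of losses. Three voters face two
alternatives `a` and `b`, ties being broken in favour of `a`, and the profiles are chosen so that
`a` wins every round while voter `0` approves only `b` during a window of prescribed length.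

For loss-based rules, and for win-based rules whose weights stay nonnegative, voter `0` is on the
winning side for `2L` rounds while voters `1` and `2` take turns on the losing side, which keeps
their weights interleaved. In the next `L` rounds voters `1` and `2` together outweigh voter `0`:
each of them has lost `L` times (loss-based), or has won fewer times than voter `0` (win-based).
If the win-based weights become negative, first at `g^[A] 1 < 0`, all voters first win `A` rounds
together. Then voters `0` and `1` take turns winning alone against the other one and voter `2`,
whose weight is negative; finally voter `2` alone beats voters `0` and `1`, whose weights are
negative and at most hers. -/

open Function

section Weights

variable (R : PerpetualRule) {n : ℕ} (D : DecisionSeq n) (v : Fin n)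

lemma satAt_eq_count (t : ℕ) :
    satAt R D v t = Nat.count (fun i => R.choice n D i ∈ D.A i v) t :=
  (Nat.count_eq_card_filter_range _ _).symm

lemma satAt_succ (t : ℕ) :
    satAt R D v (t + 1) = satAt R D v t + if R.choice n D t ∈ D.A t v then 1 else 0 := by
  simp only [satAt_eq_count, Nat.count_succ]

lemma basicWeight_id_left (g : ℝ → ℝ) (k : ℕ) :
    basicWeight R id g n D k v = g^[satAt R D v k] 1 := by
  induction k with
  | zero => simp [basicWeight, satAt]
  | succ k ih =>
    simp only [basicWeight, satAt_succ, ih]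
    split_ifs <;> simp [iterate_succ_apply']

lemma basicWeight_id_right (f : ℝ → ℝ) (k : ℕ) :
    basicWeight R f id n D k v = f^[k - satAt R D v k] 1 := by
  induction k with
  | zero => simp [basicWeight, satAt]
  | succ k ih =>
    have hle : satAt R D v k ≤ k := by rw [satAt_eq_count]; exact Nat.count_le _
    simp only [basicWeight, satAt_succ, ih]
    split_ifs
    · simp
    · rw [show k + 1 - (satAt R D v k + 0) = k - satAt R D v k + 1 by omega,
        iterate_succ_apply']

end Weights

lemma IsBasicWAMWith.selectedBy_iterate_satAt {R : PerpetualRule} {g : ℝ → ℝ}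
    {tb : ℕ → ℕ → Prop} (h : IsBasicWAMWith R id g tb) {n : ℕ} (D : DecisionSeq n)
    (k : ℕ) :
    SelectedBy (fun v => g^[satAt R D v k] 1) (D.A k) (D.C k) tb (R.choice n D k) := by
  convert h n D k using 1
  exact funext fun v => (basicWeight_id_left R D v g k).symm

lemma IsBasicWAMWith.selectedBy_iterate_sub_satAt {R : PerpetualRule} {f : ℝ → ℝ}
    {tb : ℕ → ℕ → Prop} (h : IsBasicWAMWith R f id tb) {n : ℕ} (D : DecisionSeq n)
    (k : ℕ) :
    SelectedBy (fun v => f^[k - satAt R D v k] 1) (D.A k) (D.C k) tb (R.choice n D k) := by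
  convert h n D k using 1
  exact funext fun v => (basicWeight_id_right R D v f k).symm

section Forcing

variable {R : PerpetualRule} {tb : ℕ → ℕ → Prop} {n : ℕ} {D : DecisionSeq n}

lemma hasDrySpell_of_forall_not_mem {v : Fin n} (t l : ℕ)
    (h : ∀ i, t ≤ i → i < t + l → R.choice n D i ∉ D.A i v) : HasDrySpell R D v l := by
  refine ⟨t, ?_⟩
  rw [satAt_eq_count, satAt_eq_count, Nat.count_add, left_eq_add]
  exact Nat.count_of_forall_not fun i hi => h (t + i) (by omega) (by omega)

/-- `φ k s` is the weight before round `k` of a voter satisfied `s` times; `hforced` evaluates it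
as if `a` had won every earlier round. -/
lemma choice_eq_of_forced (φ : ℕ → ℕ → ℝ) (a T : ℕ)
    (hR : ∀ k, SelectedBy (fun v => φ k (satAt R D v k)) (D.A k) (D.C k) tb (R.choice n D k))
    (hforced : ∀ k < T, ∀ c, SelectedBy (fun v => φ k (Nat.count (fun i => a ∈ D.A i v) k))
      (D.A k) (D.C k) tb c → c = a) :
    ∀ k < T, R.choice n D k = a := by
  intro k
  induction k using Nat.strong_induction_on with
  | _ k ih =>
    intro hk
    have hsat : ∀ v, satAt R D v k = Nat.count (fun i => a ∈ D.A i v) k := by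
      intro v
      rw [satAt_eq_count, Nat.count_eq_card_filter_range, Nat.count_eq_card_filter_range]
      refine congrArg _ (Finset.filter_congr fun i hi => ?_)
      have hik := Finset.mem_range.1 hi
      rw [ih i hik (hik.trans hk)]
    exact hforced k hk _ (by simpa only [hsat] using hR k)

end Forcing

noncomputable def twoAlternativeSeq {n : ℕ} (a b : ℕ) (P : ℕ → Fin n → Prop) :
    DecisionSeq n where
  C _ := {a, b}
  A i v := if P i v then {a} else {b}
  approvalSub i v := by split_ifs <;> simp
  approvalNonempty i v := by split_ifs <;> simp

section TwoAlternatives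

variable {R : PerpetualRule} {tb : ℕ → ℕ → Prop} {n : ℕ} {a b : ℕ}
  {P : ℕ → Fin n → Prop}

lemma left_mem_twoAlternativeSeq_A (hne : a ≠ b) {i : ℕ} {v : Fin n} :
    a ∈ (twoAlternativeSeq a b P).A i v ↔ P i v := by
  by_cases h : P i v <;> simp [twoAlternativeSeq, h, hne]

lemma right_mem_twoAlternativeSeq_A (hne : a ≠ b) {i : ℕ} {v : Fin n} :
    b ∈ (twoAlternativeSeq a b P).A i v ↔ ¬ P i v := by
  by_cases h : P i v <;> simp [twoAlternativeSeq, h, hne.symm]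

lemma eq_of_selectedBy_twoAlternativeSeq [Std.Antisymm tb] (hne : a ≠ b) (hab : tb a b)
    {β : Fin n → ℝ} {k c : ℕ}
    (hscore : (∑ v, if P k v then 0 else β v) ≤ ∑ v, if P k v then β v else 0)
    (h : SelectedBy β ((twoAlternativeSeq a b P).A k) ((twoAlternativeSeq a b P).C k) tb c) :
    c = a := by
  obtain ⟨hc, hmax, htie⟩ := h
  have hscore_ab : approvalScore β ((twoAlternativeSeq a b P).A k) b ≤
      approvalScore β ((twoAlternativeSeq a b P).A k) a := by
    simpa only [approvalScore, left_mem_twoAlternativeSeq_A hne,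
      right_mem_twoAlternativeSeq_A hne, ite_not] using hscore
  have hmem : ∀ {c}, c ∈ (twoAlternativeSeq a b P).C k ↔ c = a ∨ c = b := by
    simp [twoAlternativeSeq]
  rcases hmem.1 hc with rfl | rfl
  · rfl
  · have hba : tb c a :=
      htie a (hmem.2 (.inl rfl)) (le_antisymm (hmax a (hmem.2 (.inl rfl))) hscore_ab)
    exact (hne (antisymm hab hba)).elim

lemma hasDrySpell_twoAlternativeSeq [Std.Antisymm tb] (hne : a ≠ b) (hab : tb a b)
    (φ : ℕ → ℕ → ℝ)
    (hR : ∀ k, SelectedBy (fun v => φ k (satAt R (twoAlternativeSeq a b P) v k))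
      ((twoAlternativeSeq a b P).A k) ((twoAlternativeSeq a b P).C k) tb
      (R.choice n (twoAlternativeSeq a b P) k))
    (T : ℕ) (hscore : ∀ k < T,
      (∑ v, if P k v then 0 else φ k (Nat.count (P · v) k)) ≤
        ∑ v, if P k v then φ k (Nat.count (P · v) k) else 0)
    {v : Fin n} {t l : ℕ} (htl : t + l ≤ T) (hdry : ∀ i, t ≤ i → i < t + l → ¬ P i v) :
    HasDrySpell R (twoAlternativeSeq a b P) v l := by
  have hchoice := choice_eq_of_forced φ a T hR fun k hk c hc => by
    refine eq_of_selectedBy_twoAlternativeSeq hne hab ?_ hc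
    simpa only [left_mem_twoAlternativeSeq_A hne] using hscore k hk
  refine hasDrySpell_of_forall_not_mem t l fun i hti hil => ?_
  rw [hchoice i (by omega), left_mem_twoAlternativeSeq_A hne]
  exact hdry i hti hil

end TwoAlternatives

def drySpellPattern (L i : ℕ) : Fin 3 → Prop :=
  if i < 2 * L then ![True, i % 2 = 1, i % 2 = 0] else ![False, True, True]

lemma count_drySpellPattern (L k : ℕ) :
    Nat.count (drySpellPattern L · 0) k = min k (2 * L) ∧
    Nat.count (drySpellPattern L · 1) k = min k (2 * L) / 2 + (k - 2 * L) ∧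
    Nat.count (drySpellPattern L · 2) k = (min k (2 * L) + 1) / 2 + (k - 2 * L) := by
  induction k with
  | zero => simp
  | succ k ih =>
    obtain ⟨h0, h1, h2⟩ := ih
    rw [Nat.count_succ, Nat.count_succ, Nat.count_succ, h0, h1, h2]
    by_cases hk : k < 2 * L <;>
      rcases Nat.mod_two_eq_zero_or_one k with hp | hp <;>
      simp only [drySpellPattern, hk, hp, ↓reduceIte, zero_ne_one, one_ne_zero, Fin.isValue,
        Matrix.cons_val_zero, Matrix.cons_val_one, Matrix.cons_val, add_zero] <;> omega

lemma drySpellPattern_score_le_of_le_map {f : ℝ → ℝ} (hf : ∀ x, x ≤ f x) {L k : ℕ}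
    (hk : k < 3 * L) :
    (∑ v, if drySpellPattern L k v then 0
      else f^[k - Nat.count (drySpellPattern L · v) k] 1) ≤
    ∑ v, if drySpellPattern L k v then f^[k - Nat.count (drySpellPattern L · v) k] 1 else 0 := by
  have hmono : Monotone fun s => f^[s] 1 :=
    monotone_nat_of_le_succ fun s => by rw [iterate_succ_apply']; exact hf _
  have hpos (s : ℕ) : 0 ≤ f^[s] 1 := zero_le_one.trans (hmono (Nat.zero_le s))
  obtain ⟨h0, h1, h2⟩ := count_drySpellPattern L k
  simp only [Fin.sum_univ_three, h0, h1, h2]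
  by_cases hk2 : k < 2 * L
  · rcases Nat.mod_two_eq_zero_or_one k with hp | hp <;>
      simp only [drySpellPattern, hk2, hp, ↓reduceIte, zero_ne_one, one_ne_zero, Fin.isValue,
        Matrix.cons_val_zero, Matrix.cons_val_one, Matrix.cons_val, zero_add, add_zero] <;>
      exact le_add_of_nonneg_of_le (hpos _) (hmono (by omega))
  · simp only [drySpellPattern, hk2, ↓reduceIte, Fin.isValue, Matrix.cons_val_zero,
      Matrix.cons_val_one, Matrix.cons_val, zero_add, add_zero]
    exact le_add_of_le_of_nonneg (hmono (by omega)) (hpos _)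

lemma drySpellPattern_score_le_of_map_le {g : ℝ → ℝ} (hg : ∀ x, g x ≤ x)
    (hnonneg : ∀ s, 0 ≤ g^[s] 1) {L k : ℕ} (hk : k < 3 * L) :
    (∑ v, if drySpellPattern L k v then 0 else g^[Nat.count (drySpellPattern L · v) k] 1) ≤
    ∑ v, if drySpellPattern L k v then g^[Nat.count (drySpellPattern L · v) k] 1 else 0 := by
  have hanti : Antitone fun s => g^[s] 1 :=
    antitone_nat_of_succ_le fun s => by rw [iterate_succ_apply']; exact hg _
  obtain ⟨h0, h1, h2⟩ := count_drySpellPattern L k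
  simp only [Fin.sum_univ_three, h0, h1, h2]
  by_cases hk2 : k < 2 * L
  · rcases Nat.mod_two_eq_zero_or_one k with hp | hp <;>
      simp only [drySpellPattern, hk2, hp, ↓reduceIte, zero_ne_one, one_ne_zero, Fin.isValue,
        Matrix.cons_val_zero, Matrix.cons_val_one, Matrix.cons_val, zero_add, add_zero] <;>
      exact le_add_of_nonneg_of_le (hnonneg _) (hanti (by omega))
  · simp only [drySpellPattern, hk2, ↓reduceIte, Fin.isValue, Matrix.cons_val_zero,
      Matrix.cons_val_one, Matrix.cons_val, zero_add, add_zero]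
    exact le_add_of_le_of_nonneg (hanti (by omega)) (hnonneg _)

def delayedDrySpellPattern (A p i : ℕ) : Fin 3 → Prop :=
  if i < A then ![True, True, True]
  else if i < A + 2 * p then ![(i - A) % 2 = 0, (i - A) % 2 = 1, False]
  else ![False, False, True]

lemma count_delayedDrySpellPattern (A p k : ℕ) :
    Nat.count (delayedDrySpellPattern A p · 0) k = min k A + (min (k - A) (2 * p) + 1) / 2 ∧
    Nat.count (delayedDrySpellPattern A p · 1) k = min k A + min (k - A) (2 * p) / 2 ∧
    Nat.count (delayedDrySpellPattern A p · 2) k = min k A + (k - (A + 2 * p)) := by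
  induction k with
  | zero => simp
  | succ k ih =>
    obtain ⟨h0, h1, h2⟩ := ih
    rw [Nat.count_succ, Nat.count_succ, Nat.count_succ, h0, h1, h2]
    by_cases hkA : k < A
    · simp only [delayedDrySpellPattern, hkA, ↓reduceIte, Fin.isValue, Matrix.cons_val_zero,
        Matrix.cons_val_one, Matrix.cons_val]
      omega
    · by_cases hk2 : k < A + 2 * p <;>
        rcases Nat.mod_two_eq_zero_or_one (k - A) with hp | hp <;>
        simp only [delayedDrySpellPattern, hkA, hk2, hp, ↓reduceIte, zero_ne_one, one_ne_zero,
          Fin.isValue, Matrix.cons_val_zero, Matrix.cons_val_one, Matrix.cons_val,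
          add_zero] <;> omega

lemma delayedDrySpellPattern_score_le {g : ℝ → ℝ} (hg : ∀ x, g x ≤ x) {A p k : ℕ}
    (hneg : g^[A] 1 < 0) (hnonneg : ∀ s < A, 0 ≤ g^[s] 1) (hk : k < A + 3 * p) :
    (∑ v, if delayedDrySpellPattern A p k v then 0
      else g^[Nat.count (delayedDrySpellPattern A p · v) k] 1) ≤
    ∑ v, if delayedDrySpellPattern A p k v
      then g^[Nat.count (delayedDrySpellPattern A p · v) k] 1 else 0 := by
  have hanti : Antitone fun s => g^[s] 1 :=
    antitone_nat_of_succ_le fun s => by rw [iterate_succ_apply']; exact hg _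
  have hnonpos {s : ℕ} (hs : A ≤ s) : g^[s] 1 ≤ 0 := (hanti hs).trans hneg.le
  obtain ⟨h0, h1, h2⟩ := count_delayedDrySpellPattern A p k
  simp only [Fin.sum_univ_three, h0, h1, h2]
  by_cases hkA : k < A
  · simp only [delayedDrySpellPattern, hkA, ↓reduceIte, Fin.isValue, Matrix.cons_val_zero,
      Matrix.cons_val_one, Matrix.cons_val, add_zero]
    exact add_nonneg (add_nonneg (hnonneg _ (by omega)) (hnonneg _ (by omega)))
      (hnonneg _ (by omega))
  by_cases hk2 : k < A + 2 * p
  · rcases Nat.mod_two_eq_zero_or_one (k - A) with hp | hp <;>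
      simp only [delayedDrySpellPattern, hkA, hk2, hp, ↓reduceIte, zero_ne_one, one_ne_zero,
        Fin.isValue, Matrix.cons_val_zero, Matrix.cons_val_one, Matrix.cons_val, zero_add,
        add_zero] <;>
      exact add_le_of_le_of_nonpos (hanti (by omega)) (hnonpos (by omega))
  · simp only [delayedDrySpellPattern, hkA, hk2, ↓reduceIte, Fin.isValue, Matrix.cons_val_zero,
      Matrix.cons_val_one, Matrix.cons_val, zero_add, add_zero]
    exact add_le_of_le_of_nonpos (hanti (by omega)) (hnonpos (by omega))

section DrySpells

variable {R : PerpetualRule} {tb : ℕ → ℕ → Prop} [Std.Antisymm tb] {a b : ℕ}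

lemma IsLossBasedWAM.hasDrySpell {f : ℝ → ℝ} (h : IsLossBasedWAM R f tb) (hne : a ≠ b)
    (hab : tb a b) (L : ℕ) : HasDrySpell R (twoAlternativeSeq a b (drySpellPattern L)) 0 L :=
  hasDrySpell_twoAlternativeSeq hne hab (fun k s => f^[k - s] 1)
    (h.2.selectedBy_iterate_sub_satAt _) (3 * L)
    (fun _ hk => drySpellPattern_score_le_of_le_map h.1 hk) (t := 2 * L) (by omega)
    fun i hi _ => by simp [drySpellPattern, show ¬ i < 2 * L by omega]

lemma IsWinBasedWAM.hasDrySpell_of_nonneg {g : ℝ → ℝ} (h : IsWinBasedWAM R g tb)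
    (hne : a ≠ b) (hab : tb a b) (hnonneg : ∀ s, 0 ≤ g^[s] 1) (L : ℕ) :
    HasDrySpell R (twoAlternativeSeq a b (drySpellPattern L)) 0 L :=
  hasDrySpell_twoAlternativeSeq hne hab (fun _ s => g^[s] 1) (h.2.selectedBy_iterate_satAt _)
    (3 * L) (fun _ hk => drySpellPattern_score_le_of_map_le h.1 hnonneg hk) (t := 2 * L)
    (by omega) fun i hi _ => by simp [drySpellPattern, show ¬ i < 2 * L by omega]

lemma IsWinBasedWAM.hasDrySpell_of_neg {g : ℝ → ℝ} (h : IsWinBasedWAM R g tb) (hne : a ≠ b)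
    (hab : tb a b) {A : ℕ} (hneg : g^[A] 1 < 0) (hnonneg : ∀ s < A, 0 ≤ g^[s] 1) (p : ℕ) :
    HasDrySpell R (twoAlternativeSeq a b (delayedDrySpellPattern A p)) 0 p :=
  hasDrySpell_twoAlternativeSeq hne hab (fun _ s => g^[s] 1) (h.2.selectedBy_iterate_satAt _)
    (A + 3 * p) (fun _ hk => delayedDrySpellPattern_score_le h.1 hneg hnonneg hk)
    (t := A + 2 * p) (by omega) fun i hi _ => by
      simp [delayedDrySpellPattern, show ¬ i < A by omega, show ¬ i < A + 2 * p by omega]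

end DrySpells

/-- Every win-based WAM and every loss-based WAM has unbounded
dry spells: for no function `d : ℕ → ℕ` does such a rule have a dry spell
guarantee of `d`. -/
theorem winBased_and_lossBased_WAMs_have_unbounded_dry_spells
    (R : PerpetualRule) (tb : ℕ → ℕ → Prop) (htb : IsLinearOrder ℕ tb) :
    (∀ g : ℝ → ℝ, IsWinBasedWAM R g tb → ∀ d : ℕ → ℕ, ¬ DrySpellGuarantee R d) ∧
    (∀ f : ℝ → ℝ, IsLossBasedWAM R f tb → ∀ d : ℕ → ℕ, ¬ DrySpellGuarantee R d) := by
  obtain ⟨a, b, hne, hab⟩ : ∃ a b : ℕ, a ≠ b ∧ tb a b :=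
    (total_of tb 0 1).elim (fun h => ⟨0, 1, by decide, h⟩) fun h => ⟨1, 0, by decide, h⟩
  refine ⟨fun g hR d hd => ?_, fun f hR d hd => hd 3 _ 0 (hR.hasDrySpell hne hab (d 3))⟩
  by_cases hnonneg : ∀ s, 0 ≤ g^[s] 1
  · exact hd 3 _ 0 (hR.hasDrySpell_of_nonneg hne hab hnonneg (d 3))
  · have hneg : ∃ s, g^[s] 1 < 0 := by simpa using hnonneg
    exact hd 3 _ 0 (hR.hasDrySpell_of_neg hne hab (Nat.find_spec hneg)
      (fun s hs => not_lt.1 (Nat.find_min hneg hs)) (d 3))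
end

section
/- No loss-based WAM satisfies simple proportionality. -/
open scoped Classical
open Finset

/-!
If a loss-based WAM with update `f` were simply proportional, two simple profiles would give
contradictory bounds on the weights `f^[k] 1` of a voter who has lost `k` rounds. With
three voters on one alternative and three singleton voters, consider the round in which the
large group loses for the third time: a singleton voter who has lost every earlier round
outscores three voters with two losses each, so `3 * f^[2] 1 ≤ f^[5] 1`. With six voters on
`a` and two on a tie-preferred `b`, consider the round in which `a` wins for the sixth time:
`a` beats `b` although the `a`-voters have at most two losses and the `b`-voters at least five,
so `2 * f^[5] 1 < 6 * f^[2] 1`.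
-/

theorem Nat.count_add_count_not (p : ℕ → Prop) [DecidablePred p] (n : ℕ) :
    Nat.count p n + Nat.count (fun i => ¬ p i) n = n := by
  induction n with
  | zero => simp
  | succ n ih => by_cases h : p n <;> simp [Nat.count_succ, h] <;> omega

theorem Nat.exists_count_eq_of_lt_count {p : ℕ → Prop} [DecidablePred p] {m T : ℕ}
    (h : m < Nat.count p T) : ∃ t < T, p t ∧ Nat.count p t = m :=
  have hm : ∀ hf : (Set.ofPred p).Finite, m < hf.toFinset.card :=
    fun hf => h.trans_le (Nat.count_le_card hf T)
  ⟨Nat.nth p m, Nat.nth_lt_of_lt_count h, Nat.nth_mem m hm, Nat.count_nth hm⟩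

theorem Nat.count_eq_zero_of_count_le_one {p : ℕ → Prop} [DecidablePred p] {t T : ℕ}
    (hT : Nat.count p T ≤ 1) (ht : t < T) (hp : p t) : Nat.count p t = 0 := by
  have := Nat.count_strict_mono hp ht
  omega

theorem SelectedBy.approvalScore_lt_of_tb {n : ℕ} {β : Fin n → ℝ} {A : Profile n}
    {Cs : Finset ℕ} {tb : ℕ → ℕ → Prop} [Std.Antisymm tb] {c c' : ℕ}
    (h : SelectedBy β A Cs tb c) (hc' : c' ∈ Cs) (hne : c' ≠ c) (htb : tb c' c) :
    approvalScore β A c' < approvalScore β A c :=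
  (h.2.1 c' hc').lt_of_ne fun heq => hne (antisymm htb (h.2.2 c' hc' heq))

theorem basicWeight_id_eq_iterate (R : PerpetualRule) (f : ℝ → ℝ) {n : ℕ}
    (D : DecisionSeq n) (t : ℕ) (v : Fin n) :
    basicWeight R f id n D t v = f^[Nat.count (fun i => R.choice n D i ∉ D.A i v) t] 1 := by
  induction t with
  | zero => rfl
  | succ t ih =>
    by_cases h : R.choice n D t ∈ D.A t v <;>
      simp [basicWeight, Nat.count_succ, h, ih, Function.iterate_succ_apply']

def DecisionSeq.ofVotes {n : ℕ} (p : Fin n → ℕ) : DecisionSeq n where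
  C _ := Finset.univ.image p
  A _ v := {p v}
  approvalSub _ v := by simp
  approvalNonempty _ _ := Finset.singleton_nonempty _

namespace DecisionSeq.ofVotes

variable {n : ℕ} (p : Fin n → ℕ) (R : PerpetualRule)

theorem isSimple : (ofVotes p).IsSimple :=
  ⟨fun _ => rfl, fun _ => rfl, fun _ => Finset.card_singleton _⟩

theorem groupSize_eq (v : Fin n) :
    groupSize (ofVotes p) v = (Finset.univ.filter fun u => p u = p v).card := by
  simp [groupSize, ofVotes]

theorem satAt_eq (v : Fin n) (t : ℕ) :
    satAt R (ofVotes p) v t = Nat.count (fun i => R.choice n (ofVotes p) i = p v) t := by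
  rw [satAt, Nat.count_eq_card_filter_range]
  convert rfl using 3
  simp [ofVotes]

theorem exists_choice_eq (k : ℕ) : ∃ v, R.choice n (ofVotes p) k = p v := by
  simpa [ofVotes, eq_comm] using R.choice_mem n (ofVotes p) k

theorem count_choice_eq {R : PerpetualRule} (hR : SatisfiesSimpleProportionality R)
    (v : Fin n) :
    Nat.count (fun i => R.choice n (ofVotes p) i = p v) n =
      (Finset.univ.filter fun u => p u = p v).card := by
  rw [← satAt_eq, ← groupSize_eq]
  exact hR n _ (isSimple p) v

theorem approvalScore_basicWeight_id (f : ℝ → ℝ) (t c : ℕ) :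
    approvalScore (basicWeight R f id n (ofVotes p) t) ((ofVotes p).A t) c =
      (Finset.univ.filter fun v => p v = c).card *
        f^[Nat.count (fun i => R.choice n (ofVotes p) i ≠ c) t] 1 := by
  have hvoters : (Finset.univ.filter fun v => c ∈ (ofVotes p).A t v) =
      Finset.univ.filter fun v => p v = c := by
    simp [ofVotes, eq_comm]
  rw [approvalScore, ← Finset.sum_filter, hvoters, ← nsmul_eq_mul, ← Finset.sum_const]
  refine Finset.sum_congr rfl fun v hv => ?_
  have hv : p v = c := (Finset.mem_filter.mp hv).2
  rw [basicWeight_id_eq_iterate, ← hv]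
  convert rfl using 3
  simp [ofVotes]

end DecisionSeq.ofVotes

namespace IsLossBasedWAM

open DecisionSeq.ofVotes

variable {R : PerpetualRule} {f : ℝ → ℝ} {tb : ℕ → ℕ → Prop}

theorem three_mul_iterate_two_le (hR : IsLossBasedWAM R f tb)
    (hSP : SatisfiesSimpleProportionality R) : 3 * f^[2] 1 ≤ f^[5] 1 := by
  let p : Fin 6 → ℕ := ![3, 3, 3, 0, 1, 2]
  let D := DecisionSeq.ofVotes p
  have hwins : Nat.count (fun i => R.choice 6 D i = 3) 6 = 3 := count_choice_eq p hSP 0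
  have hlosses : Nat.count (fun i => R.choice 6 D i = 3) 6 +
      Nat.count (fun i => R.choice 6 D i ≠ 3) 6 = 6 := Nat.count_add_count_not _ 6
  obtain ⟨t, ht, hlose, hcount⟩ :=
    Nat.exists_count_eq_of_lt_count (p := fun i => R.choice 6 D i ≠ 3) (m := 2) (T := 6)
      (by omega)
  obtain ⟨u, hu⟩ := exists_choice_eq p R t
  have hsingleton : ∀ u, p u ≠ 3 → (Finset.univ.filter fun w => p w = p u).card = 1 := by
    decide
  have hfirst : Nat.count (fun i => R.choice 6 D i = p u) t = 0 :=
    Nat.count_eq_zero_of_count_le_one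
      ((count_choice_eq p hSP u).trans (hsingleton u (hu ▸ hlose))).le ht hu
  have hwinner : Nat.count (fun i => R.choice 6 D i ≠ p u) t = t := by
    have : Nat.count (fun i => R.choice 6 D i = p u) t +
        Nat.count (fun i => R.choice 6 D i ≠ p u) t = t := Nat.count_add_count_not _ t
    omega
  have hgroup : (Finset.univ.filter fun w => p w = 3).card = 3 := by decide
  have hsel := (hR.2 6 D t).2.1 3 (Finset.mem_image_of_mem p (Finset.mem_univ 0))
  rw [hu, approvalScore_basicWeight_id, approvalScore_basicWeight_id, hcount, hwinner,
    hsingleton u (hu ▸ hlose), hgroup] at hsel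
  calc 3 * f^[2] 1 ≤ f^[t] 1 := by simpa using hsel
    _ ≤ f^[5] 1 := Function.monotone_iterate_of_id_le hR.1 (by omega) 1

theorem iterate_five_lt [Std.Antisymm tb] (hR : IsLossBasedWAM R f tb) {a b : ℕ} (hab : a ≠ b)
    (hba : tb b a) (hSP : SatisfiesSimpleProportionality R) : 2 * f^[5] 1 < 6 * f^[2] 1 := by
  let p : Fin 8 → ℕ := ![a, a, a, a, a, a, b, b]
  let D := DecisionSeq.ofVotes p
  have hgroupA : (Finset.univ.filter fun w => p w = a).card = 6 := by
    simp [p, Finset.card_filter, Fin.sum_univ_succ, hab.symm, -Finset.sum_boole]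
  have hgroupB : (Finset.univ.filter fun w => p w = b).card = 2 := by
    simp [p, Finset.card_filter, Fin.sum_univ_succ, hab, -Finset.sum_boole]
  have hwinsA : Nat.count (fun i => R.choice 8 D i = a) 8 = 6 :=
    (count_choice_eq p hSP 0).trans hgroupA
  have hlossesA : Nat.count (fun i => R.choice 8 D i = a) 8 +
      Nat.count (fun i => R.choice 8 D i ≠ a) 8 = 8 := Nat.count_add_count_not _ 8
  obtain ⟨t, ht, hwin, hcount⟩ :=
    Nat.exists_count_eq_of_lt_count (p := fun i => R.choice 8 D i = a) (m := 5) (T := 8)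
      (by omega)
  have hlossA : Nat.count (fun i => R.choice 8 D i ≠ a) t ≤ 2 := by
    have := Nat.count_monotone (fun i => R.choice 8 D i ≠ a) ht.le
    omega
  have hlossB : 5 ≤ Nat.count (fun i => R.choice 8 D i ≠ b) t :=
    hcount ▸ Nat.count_mono_left fun _ _ h => h ▸ hab
  have hlt := (hR.2 8 D t).approvalScore_lt_of_tb
    (show b ∈ D.C t from Finset.mem_image_of_mem p (Finset.mem_univ 6))
    (hwin ▸ hab.symm) (hwin ▸ hba)
  rw [hwin, approvalScore_basicWeight_id, approvalScore_basicWeight_id, hgroupA, hgroupB]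
    at hlt
  have hmono := Function.monotone_iterate_of_id_le hR.1
  calc 2 * f^[5] 1 ≤ 2 * f^[Nat.count (fun i => R.choice 8 D i ≠ b) t] 1 := by
        gcongr; exact hmono hlossB 1
    _ < 6 * f^[Nat.count (fun i => R.choice 8 D i ≠ a) t] 1 := by exact_mod_cast hlt
    _ ≤ 6 * f^[2] 1 := by gcongr; exact hmono hlossA 1

end IsLossBasedWAM

/-- No loss-based WAM satisfies simple proportionality. -/
theorem lossBased_WAM_fails_simple_proportionality
    (R : PerpetualRule) (f : ℝ → ℝ) (tb : ℕ → ℕ → Prop) (htb : IsLinearOrder ℕ tb)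
    (hR : IsLossBasedWAM R f tb) :
    ¬ SatisfiesSimpleProportionality R := by
  intro hSP
  have := htb
  obtain ⟨a, b, hab, hba⟩ : ∃ a b : ℕ, a ≠ b ∧ tb b a :=
    (total_of tb 0 1).elim (fun h => ⟨1, 0, one_ne_zero, h⟩) (fun h => ⟨0, 1, zero_ne_one, h⟩)
  have hsmall := hR.three_mul_iterate_two_le hSP
  have hlarge := hR.iterate_five_lt hab hba hSP
  linarith
end

section
/- Perpetual Phragmén is not equivalent to any weighted approval method: there is no WAM R such that for every decision sequence D, the choice sequence selected by R equals the choice sequence selected by Perpetual Phragmén (under the same tie-breaking orders). -/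
open scoped Classical
open Finset

/-!
Four voters, two common history rounds. In round 0 voter 0 approves only `1` and voters
1, 2, 3 approve only `0`; in round 1 voters 0, 3 approve `0` and voters 1, 2 approve `1`.
Phragmén elects `0` both times and leaves the loads `(2/3, 1/3, 1/3, 2/3)`. In round 2 take
either profile `P` (voters 0, 3 approve `0`, voter 1 approves `1`, voter 2 approves `2`), where
Phragmén elects `0` (load `7/6` against `4/3`), or profile `Q`, where voter 2 approves `{0, 1}`
instead and Phragmén elects `1` (load `5/6` against `8/9`). A WAM has the same weights `β` in
both, since the histories agree. Passing from `P` to `Q` raises the scores of `0` and `1` by the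
same amount `β 2`, so `0` winning in `P` and `1` winning in `Q` force a tie between them,
which the tie-breaking order would have to resolve both ways.
-/

theorem SelectedBy.eq_of_approvalScore_sub_eq {n : ℕ} {β : Fin n → ℝ} {A B : Profile n}
    {Cs : Finset ℕ} {tb : ℕ → ℕ → Prop} [Std.Antisymm tb] {a b : ℕ}
    (ha : SelectedBy β A Cs tb a) (hb : SelectedBy β B Cs tb b)
    (hshift : approvalScore β B a - approvalScore β A a =
      approvalScore β B b - approvalScore β A b) :
    a = b := by
  have hba := ha.2.1 b hb.1
  have hab := hb.2.1 a ha.1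
  exact antisymm (ha.2.2 b hb.1 (by linarith)) (hb.2.2 a ha.1 (by linarith))

namespace PerpetualPhragmen

variable {n : ℕ}

def supporters (A : Profile n) (c : ℕ) : Finset (Fin n) :=
  univ.filter fun v => c ∈ A v

/-- The clauses of one round of `IsPerpetualPhragmen` that do not involve tie-breaking. -/
def IsChoice (A : Profile n) (ld : Fin n → ℝ) (S : Finset (Fin n)) (w : ℕ) : Prop :=
  S.Nonempty ∧ (∀ v ∈ S, w ∈ A v) ∧
    ∀ N' : Finset (Fin n), N'.Nonempty → (∃ c, ∀ v ∈ N', c ∈ A v) → newLoad ld S ≤ newLoad ld N'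

def IsRun (D : DecisionSeq n) (ld : ℕ → Fin n → ℝ) (S : ℕ → Finset (Fin n)) (w : ℕ → ℕ) :
    Prop :=
  ld 0 = 0 ∧ ∀ k, w k ∈ D.C k ∧ IsChoice (D.A k) (ld k) (S k) (w k) ∧
    ld (k + 1) = fun v => if v ∈ S k then newLoad (ld k) (S k) else ld k v

theorem _root_.IsPerpetualPhragmen.exists_isRun {R : PerpetualRule} {tb : ℕ → ℕ → Prop}
    (h : IsPerpetualPhragmen R tb) :
    ∃ (ld : ∀ n : ℕ, DecisionSeq n → ℕ → Fin n → ℝ)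
      (S : ∀ n : ℕ, DecisionSeq n → ℕ → Finset (Fin n)),
      ∀ n (D : DecisionSeq n), IsRun D (ld n D) (S n D) (R.choice n D) := by
  obtain ⟨ld, S, hld0, hstep⟩ := h
  refine ⟨ld, S, fun n D => ⟨funext (hld0 n D), fun k => ?_⟩⟩
  obtain ⟨hne, happ, hmin, -, hupd⟩ := hstep n D k
  exact ⟨R.choice_mem n D k, ⟨hne, happ, hmin⟩, funext hupd⟩

theorem sum_newLoad_sub {ld : Fin n → ℝ} {S : Finset (Fin n)} (hS : S.Nonempty) :
    ∑ v ∈ S, (newLoad ld S - ld v) = 1 := by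
  have hcard : (S.card : ℝ) ≠ 0 := by exact_mod_cast hS.card_pos.ne'
  rw [sum_sub_distrib, sum_const, nsmul_eq_mul, newLoad, mul_div_cancel₀ _ hcard]
  ring

/-- Water filling: the members of a group of prospective load at most `x` absorb the whole
unit of load below level `x`. -/
theorem lt_newLoad_of_sum_max_lt {ld : Fin n → ℝ} {S T : Finset (Fin n)} {x : ℝ}
    (hST : S ⊆ T) (hS : S.Nonempty) (hx : ∑ v ∈ T, max 0 (x - ld v) < 1) :
    x < newLoad ld S := by
  by_contra! hle
  have : ∑ v ∈ S, (newLoad ld S - ld v) ≤ ∑ v ∈ T, max 0 (x - ld v) :=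
    calc ∑ v ∈ S, (newLoad ld S - ld v) ≤ ∑ v ∈ S, max 0 (x - ld v) :=
          sum_le_sum fun _ _ => le_max_of_le_right (by linarith)
      _ ≤ ∑ v ∈ T, max 0 (x - ld v) :=
          sum_le_sum_of_subset_of_nonneg hST fun _ _ _ => le_max_left _ _
  linarith [sum_newLoad_sub (ld := ld) hS]

theorem newLoad_lt_newLoad_of_ssubset {ld : Fin n → ℝ} {S T : Finset (Fin n)} (hST : S ⊂ T)
    (hS : S.Nonempty) (hT : ∀ v ∈ T, ld v < newLoad ld T) :
    newLoad ld T < newLoad ld S := by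
  refine lt_newLoad_of_sum_max_lt subset_rfl hS ?_
  have hpos : 0 < ∑ v ∈ T \ S, (newLoad ld T - ld v) :=
    sum_pos (fun v hv => sub_pos.2 (hT v (mem_sdiff.1 hv).1)) (sdiff_nonempty.2 hST.2)
  have hsplit := sum_sdiff (f := fun v => newLoad ld T - ld v) hST.1
  rw [sum_newLoad_sub (hS.mono hST.1)] at hsplit
  calc ∑ v ∈ S, max 0 (newLoad ld T - ld v) = ∑ v ∈ S, (newLoad ld T - ld v) :=
        sum_congr rfl fun v hv => max_eq_right (sub_pos.2 (hT v (hST.1 hv))).le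
    _ < 1 := by linarith

namespace IsChoice

variable {A : Profile n} {ld : Fin n → ℝ} {S : Finset (Fin n)} {w : ℕ}

theorem subset_supporters (h : IsChoice A ld S w) : S ⊆ supporters A w :=
  fun v hv => mem_filter.2 ⟨mem_univ v, h.2.1 v hv⟩

theorem newLoad_le_supporters (h : IsChoice A ld S w) {c : ℕ} (hc : (supporters A c).Nonempty) :
    newLoad ld S ≤ newLoad ld (supporters A c) :=
  h.2.2 _ hc ⟨c, fun _ hv => (mem_filter.1 hv).2⟩

theorem eq_of_sum_max_lt (h : IsChoice A ld S w) {Cs : Finset ℕ} (hw : w ∈ Cs) {c : ℕ}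
    (hc : (supporters A c).Nonempty)
    (hother : ∀ c' ∈ Cs, c' ≠ c →
      ∑ v ∈ supporters A c', max 0 (newLoad ld (supporters A c) - ld v) < 1) :
    w = c := by
  by_contra hne
  have := lt_newLoad_of_sum_max_lt h.subset_supporters h.1 (hother w hw hne)
  linarith [h.newLoad_le_supporters hc]

theorem eq_supporters (h : IsChoice A ld S w)
    (hlt : ∀ v ∈ supporters A w, ld v < newLoad ld (supporters A w)) :
    S = supporters A w := by
  by_contra hne
  have hss : S ⊂ supporters A w := ssubset_of_subset_of_ne h.subset_supporters hne
  have := newLoad_lt_newLoad_of_ssubset hss h.1 hlt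
  linarith [h.newLoad_le_supporters (h.1.mono hss.1)]

theorem eq_supporters_of_sum_max_lt (h : IsChoice A ld S w) {Cs : Finset ℕ} (hw : w ∈ Cs)
    {c : ℕ} (hc : (supporters A c).Nonempty)
    (hother : ∀ c' ∈ Cs, c' ≠ c →
      ∑ v ∈ supporters A c', max 0 (newLoad ld (supporters A c) - ld v) < 1)
    (hlt : ∀ v ∈ supporters A c, ld v < newLoad ld (supporters A c)) :
    S = supporters A c := by
  obtain rfl := h.eq_of_sum_max_lt hw hc hother
  exact h.eq_supporters hlt

end IsChoice

def exampleAlternatives : ℕ → Finset ℕ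
  | 0 | 1 => {0, 1}
  | 2 => {0, 1, 2}
  | _ => {0}

def firstProfile : Profile 4 := ![{1}, {0}, {0}, {0}]

def secondProfile : Profile 4 := ![{0}, {1}, {1}, {0}]

def exampleProfile (B : Profile 4) : ℕ → Profile 4
  | 0 => firstProfile
  | 1 => secondProfile
  | 2 => B
  | _ => fun _ => {0}

def exampleSeq (B : Profile 4) (hsub : ∀ v, B v ⊆ {0, 1, 2}) (hne : ∀ v, (B v).Nonempty) :
    DecisionSeq 4 where
  C := exampleAlternatives
  A := exampleProfile B
  approvalSub := by
    rintro (_ | _ | _ | i)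
    · exact (by decide : ∀ v, firstProfile v ⊆ {0, 1})
    · exact (by decide : ∀ v, secondProfile v ⊆ {0, 1})
    · exact hsub
    · exact fun _ => subset_rfl
  approvalNonempty := by
    rintro (_ | _ | _ | i)
    · exact (by decide : ∀ v, (firstProfile v).Nonempty)
    · exact (by decide : ∀ v, (secondProfile v).Nonempty)
    · exact hne
    · exact fun _ => singleton_nonempty 0

theorem exampleSeq_load_two {B : Profile 4} {hsub hne} {ld : ℕ → Fin 4 → ℝ}
    {S : ℕ → Finset (Fin 4)} {w : ℕ → ℕ} (h : IsRun (exampleSeq B hsub hne) ld S w) : ld 2 = ![2/3, 1/3, 1/3, 2/3] := by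
  obtain ⟨hld0, hstep⟩ := h
  obtain ⟨hw0, hS0, hld1⟩ := hstep 0
  obtain ⟨hw1, hS1, hld2⟩ := hstep 1
  change w 0 ∈ ({0, 1} : Finset ℕ) at hw0
  change w 1 ∈ ({0, 1} : Finset ℕ) at hw1
  change IsChoice firstProfile _ _ _ at hS0
  change IsChoice secondProfile _ _ _ at hS1
  have hsupp00 : supporters firstProfile 0 = {1, 2, 3} := by decide
  have hsupp01 : supporters firstProfile 1 = {0} := by decide
  have hsupp10 : supporters secondProfile 0 = {0, 3} := by decide
  have hsupp11 : supporters secondProfile 1 = {1, 2} := by decide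
  have hset0 := hS0.eq_supporters_of_sum_max_lt hw0 (c := 0) (by simp [hsupp00])
    (by simp [hsupp00, hsupp01, hld0, newLoad]; norm_num) (by simp [hsupp00, hld0, newLoad])
  have hload1 : ld 1 = ![0, 1/3, 1/3, 1/3] := by
    rw [hld1, hset0, hsupp00, hld0]
    funext v
    fin_cases v <;> simp [newLoad]
  have hset1 := hS1.eq_supporters_of_sum_max_lt hw1 (c := 0) (by simp [hsupp10])
    (by simp [hsupp10, hsupp11, hload1, newLoad]; norm_num)
    (by simp [hsupp10, hload1, newLoad]; norm_num)
  rw [hld2, hset1, hsupp10, hload1]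
  funext v
  fin_cases v <;> simp [newLoad] <;> norm_num

def profileP : Profile 4 := ![{0}, {1}, {2}, {0}]

def profileQ : Profile 4 := ![{0}, {1}, {0, 1}, {0}]

def seqP : DecisionSeq 4 := exampleSeq profileP (by decide) (by decide)

def seqQ : DecisionSeq 4 := exampleSeq profileQ (by decide) (by decide)

theorem seqP_winner_two {ld : ℕ → Fin 4 → ℝ} {S : ℕ → Finset (Fin 4)} {w : ℕ → ℕ}
    (h : IsRun seqP ld S w) : w 2 = 0 := by
  have hld := exampleSeq_load_two h
  obtain ⟨hw, hS, -⟩ := h.2 2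
  change w 2 ∈ ({0, 1, 2} : Finset ℕ) at hw
  change IsChoice profileP _ _ _ at hS
  have hsupp0 : supporters profileP 0 = {0, 3} := by decide
  have hsupp1 : supporters profileP 1 = {1} := by decide
  have hsupp2 : supporters profileP 2 = {2} := by decide
  refine hS.eq_of_sum_max_lt hw (by simp [hsupp0]) ?_
  simp [hsupp0, hsupp1, hsupp2, hld, newLoad]
  norm_num

theorem seqQ_winner_two {ld : ℕ → Fin 4 → ℝ} {S : ℕ → Finset (Fin 4)} {w : ℕ → ℕ}
    (h : IsRun seqQ ld S w) : w 2 = 1 := by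
  have hld := exampleSeq_load_two h
  obtain ⟨hw, hS, -⟩ := h.2 2
  change w 2 ∈ ({0, 1, 2} : Finset ℕ) at hw
  change IsChoice profileQ _ _ _ at hS
  have hsupp0 : supporters profileQ 0 = {0, 2, 3} := by decide
  have hsupp1 : supporters profileQ 1 = {1, 2} := by decide
  have hsupp2 : supporters profileQ 2 = ∅ := by decide
  refine hS.eq_of_sum_max_lt hw (by simp [hsupp1]) ?_
  simp [hsupp0, hsupp1, hsupp2, hld, newLoad]
  norm_num

theorem approvalScore_profileQ_sub_profileP (β : Fin 4 → ℝ) :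
    approvalScore β profileQ 0 - approvalScore β profileP 0 =
      approvalScore β profileQ 1 - approvalScore β profileP 1 := by
  simp [approvalScore, Fin.sum_univ_four, profileP, profileQ]

end PerpetualPhragmen

open PerpetualPhragmen

/-- Perpetual Phragmén is not equivalent to any WAM: for no WAM
`R` (with the same tie-breaking order) do the choices of `R` coincide with those
of Perpetual Phragmén on every decision sequence. -/
theorem perpetualPhragmen_is_not_a_WAM
    (tb : ℕ → ℕ → Prop) (htb : IsLinearOrder ℕ tb)
    (R' : PerpetualRule) (hR' : IsPerpetualPhragmen R' tb)
    (R : PerpetualRule) (hR : IsWAM R tb) :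
    ∃ (n : ℕ) (D : DecisionSeq n) (k : ℕ), R.choice n D k ≠ R'.choice n D k := by
  obtain ⟨ld, S, hrun⟩ := hR'.exists_isRun
  obtain ⟨α, -, hα_causal, hα_sel⟩ := hR
  by_contra! hR_eq
  have hP : R.choice 4 seqP 2 = 0 := (hR_eq 4 seqP 2).trans (seqP_winner_two (hrun 4 seqP))
  have hQ : R.choice 4 seqQ 2 = 1 := (hR_eq 4 seqQ 2).trans (seqQ_winner_two (hrun 4 seqQ))
  have hα : α 4 seqQ 2 = α 4 seqP 2 :=
    hα_causal 4 seqQ seqP 2 fun i hi => by interval_cases i <;> exact ⟨rfl, rfl⟩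
  have hselP := hα_sel 4 seqP 2
  have hselQ := hα_sel 4 seqQ 2
  rw [hP] at hselP
  rw [hQ, hα] at hselQ
  exact zero_ne_one (hselP.eq_of_approvalScore_sub_eq hselQ
    (approvalScore_profileQ_sub_profileP _))
end

section
/- Perpetual Consensus, restricted to simple decision sequences, coincides with Frege's apportionment method: for a simple k-decision sequence with alternatives C = {c_1,…,c_m}, N(c_i) = {v ∈ N : A(v) = {c_i}} and p_i = |N(c_i)|/n, it holds for every round t and every voter v with A(v) = {c_i} that |N(c_i)|·α_t(v) = n·s_t^i, where α_t are the Perpetual Consensus weights and s_t^i the weights of Frege's apportionment method on (p_1,…,p_m); consequently, under the same tie-breaking, Perpetual Consensus selects in every round the same alternative as Frege's apportionment method. -/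
open scoped Classical
open Finset

/-! The invariant `|N(c)| · α_t(v) = n · s_t^c` turns the Perpetual Consensus score of every
alternative `c` into `max 0 (n · s_t^c)`; parties without supporters keep a nonpositive Frege
weight, and the Frege weights of all alternatives always sum to `1`. Hence some Frege weight is
positive, the winner is a Frege winner with positive weight, its supporters are exactly the
voters of positive weight approving it, and both update rules advance the invariant in step. -/

namespace DecisionSeq

variable {n : ℕ} {D : DecisionSeq n}

/-- The paper's `|N(c)|`. -/
noncomputable def partySize (D : DecisionSeq n) (c : ℕ) : ℕ :=
  (Finset.univ.filter fun u : Fin n => D.A 0 u = {c}).card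

theorem IsSimple.mem_A_iff (hD : D.IsSimple) (t : ℕ) (v : Fin n) (c : ℕ) :
    c ∈ D.A t v ↔ D.A 0 v = {c} := by
  obtain ⟨a, ha⟩ := card_eq_one.mp (hD.2.2 v)
  rw [hD.1 t, ha, mem_singleton, singleton_inj, eq_comm]

theorem IsSimple.sum_partySize (hD : D.IsSimple) : ∑ c ∈ D.C 0, (D.partySize c : ℝ) = n := by
  have hparty : ∀ c, D.partySize c = ∑ v : Fin n, if c ∈ D.A 0 v then 1 else 0 := fun c => by
    simp only [partySize, ← hD.mem_A_iff 0, card_filter]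
  have hcount : ∑ c ∈ D.C 0, D.partySize c = n := by
    simp only [hparty]
    rw [sum_comm]
    simp only [← card_filter, filter_mem_eq_inter, inter_eq_right.mpr (D.approvalSub 0 _),
      hD.2.2, sum_const, card_univ, Fintype.card_fin, smul_eq_mul, mul_one]
  exact_mod_cast hcount

end DecisionSeq

open DecisionSeq

section Frege

variable {R : PerpetualRule} {n : ℕ} {D : DecisionSeq n}

theorem fregeWeight_zero (c : ℕ) : fregeWeight R n D 0 c = D.partySize c / n := rfl

theorem fregeWeight_succ (t c : ℕ) :
    fregeWeight R n D (t + 1) c =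
      fregeWeight R n D t c + D.partySize c / n - if R.choice n D t = c then 1 else 0 := rfl

theorem fregeWeight_nonpos_of_partySize_eq_zero {c : ℕ} (hc : D.partySize c = 0) (t : ℕ) :
    fregeWeight R n D t c ≤ 0 := by
  induction t with
  | zero => simp [fregeWeight_zero, hc]
  | succ t ih =>
    rw [fregeWeight_succ, hc]
    split_ifs <;> simp only [CharP.cast_eq_zero, zero_div] <;> linarith

theorem sum_fregeWeight (hn : 0 < n) (hD : D.IsSimple) (t : ℕ) :
    ∑ c ∈ D.C 0, fregeWeight R n D t c = 1 := by
  have hn' : (n : ℝ) ≠ 0 := by positivity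
  induction t with
  | zero => simp only [fregeWeight_zero, ← sum_div, hD.sum_partySize, div_self hn']
  | succ t ih =>
    have hchoice : R.choice n D t ∈ D.C 0 := hD.2.1 t ▸ R.choice_mem n D t
    simp only [fregeWeight_succ, sum_sub_distrib, sum_add_distrib, ← sum_div, ih,
      hD.sum_partySize, div_self hn', sum_ite_eq, if_pos hchoice]
    norm_num

theorem exists_fregeWeight_pos (hn : 0 < n) (hD : D.IsSimple) (t : ℕ) :
    ∃ c ∈ D.C 0, 0 < fregeWeight R n D t c := by
  by_contra! h
  linarith [sum_nonpos h, sum_fregeWeight (R := R) hn hD t]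

end Frege

theorem pos_and_le_of_max_zero_le {ι : Type*} {f : ι → ℝ} {s : Finset ι} {w : ι}
    (hmax : ∀ c ∈ s, max 0 (f c) ≤ max 0 (f w)) (hpos : ∃ c ∈ s, 0 < f c) :
    0 < f w ∧ ∀ c ∈ s, f c ≤ f w := by
  obtain ⟨c₀, hc₀, hfc₀⟩ := hpos
  have hw : 0 < f w := by
    by_contra! hw
    have := hmax c₀ hc₀
    rw [max_eq_left hw, max_eq_right hfc₀.le] at this
    linarith
  refine ⟨hw, fun c hc => ?_⟩
  calc f c ≤ max 0 (f c) := le_max_right _ _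
    _ ≤ max 0 (f w) := hmax c hc
    _ = f w := max_eq_right hw.le

section Consensus

variable {R : PerpetualRule} {tb : ℕ → ℕ → Prop} {n : ℕ} {D : DecisionSeq n}

def MatchesFrege (R : PerpetualRule) (n : ℕ) (D : DecisionSeq n) (t : ℕ) : Prop :=
  ∀ (v : Fin n) (c : ℕ), D.A 0 v = {c} →
    (D.partySize c : ℝ) * consensusWeight R n D t v = n * fregeWeight R n D t c

theorem approvalScore_consensusWeight (hD : D.IsSimple) {t : ℕ} (h : MatchesFrege R n D t)
    (c : ℕ) :
    approvalScore (fun v => max 0 (consensusWeight R n D t v)) (D.A t) c =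
      max 0 (n * fregeWeight R n D t c) := by
  unfold approvalScore
  rw [← sum_filter]
  simp only [hD.mem_A_iff]
  rcases Nat.eq_zero_or_pos (D.partySize c) with hc | hc
  · rw [card_eq_zero.mp hc, sum_empty, max_eq_left]
    exact mul_nonpos_of_nonneg_of_nonpos n.cast_nonneg
      (fregeWeight_nonpos_of_partySize_eq_zero hc t)
  · have hc' : (D.partySize c : ℝ) ≠ 0 := by positivity
    have hterm : ∀ v ∈ Finset.univ.filter fun u : Fin n => D.A 0 u = {c},
        max 0 (consensusWeight R n D t v) = max 0 (n * fregeWeight R n D t c) / D.partySize c := by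
      intro v hv
      rw [eq_div_iff hc', mul_comm, mul_max_of_nonneg _ _ (Nat.cast_nonneg _), mul_zero,
        h v c (mem_filter.mp hv).2]
    rw [sum_congr rfl hterm, sum_const, nsmul_eq_mul]
    exact mul_div_cancel₀ _ hc'

theorem fregeWeight_choice_pos_and_le (hR : IsPerpetualConsensus R tb) (hn : 0 < n)
    (hD : D.IsSimple) {t : ℕ} (h : MatchesFrege R n D t) :
    0 < fregeWeight R n D t (R.choice n D t) ∧
      ∀ c ∈ D.C 0, fregeWeight R n D t c ≤ fregeWeight R n D t (R.choice n D t) := by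
  obtain ⟨-, hmax, -⟩ := hR n D t
  simp only [approvalScore_consensusWeight hD h, hD.2.1 t] at hmax
  have hn' : (0 : ℝ) < n := by exact_mod_cast hn
  obtain ⟨hw, hle⟩ := pos_and_le_of_max_zero_le hmax <| by
    obtain ⟨c, hc, hpos⟩ := exists_fregeWeight_pos (R := R) hn hD t
    exact ⟨c, hc, mul_pos hn' hpos⟩
  exact ⟨pos_of_mul_pos_right hw hn'.le, fun c hc => le_of_mul_le_mul_left (hle c hc) hn'⟩

theorem tb_choice_of_fregeWeight_eq (hR : IsPerpetualConsensus R tb) (hD : D.IsSimple)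
    {t : ℕ} (h : MatchesFrege R n D t) {c : ℕ} (hc : c ∈ D.C 0)
    (heq : fregeWeight R n D t c = fregeWeight R n D t (R.choice n D t)) :
    tb (R.choice n D t) c := by
  obtain ⟨-, -, htie⟩ := hR n D t
  apply htie c (hD.2.1 t ▸ hc)
  rw [approvalScore_consensusWeight hD h, approvalScore_consensusWeight hD h, heq]

theorem filter_consensus_supporters_eq (hn : 0 < n) (hD : D.IsSimple) {t w : ℕ}
    (h : MatchesFrege R n D t) (hw : 0 < fregeWeight R n D t w) :
    (Finset.univ.filter fun u : Fin n => w ∈ D.A t u ∧ 0 < consensusWeight R n D t u) =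
      Finset.univ.filter fun u : Fin n => D.A 0 u = {w} := by
  refine filter_congr fun u _ => ?_
  rw [hD.mem_A_iff, and_iff_left_iff_imp]
  intro hu
  have : (0 : ℝ) < D.partySize w * consensusWeight R n D t u := by
    rw [h u w hu]
    positivity
  exact pos_of_mul_pos_right this (Nat.cast_nonneg _)

theorem MatchesFrege.succ (hR : IsPerpetualConsensus R tb) (hn : 0 < n) (hD : D.IsSimple)
    {t : ℕ} (h : MatchesFrege R n D t) : MatchesFrege R n D (t + 1) := by
  intro v c hv
  have hn' : (n : ℝ) ≠ 0 := by positivity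
  have hc : (D.partySize c : ℝ) ≠ 0 := by
    rw [Nat.cast_ne_zero, ← pos_iff_ne_zero, partySize, card_pos]
    exact ⟨v, mem_filter.mpr ⟨mem_univ v, hv⟩⟩
  have hvc := h v c hv
  obtain ⟨hw, -⟩ := fregeWeight_choice_pos_and_le hR hn hD h
  rw [consensusWeight, fregeWeight_succ]
  beta_reduce
  by_cases hwc : R.choice n D t = c
  · subst hwc
    have hvw : 0 < consensusWeight R n D t v := by
      have : (0 : ℝ) < D.partySize (R.choice n D t) * consensusWeight R n D t v := by
        rw [hvc]
        positivity
      exact pos_of_mul_pos_right this (Nat.cast_nonneg _)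
    rw [if_pos ⟨(hD.mem_A_iff t v _).mpr hv, hvw⟩, filter_consensus_supporters_eq hn hD h hw,
      if_pos rfl]
    change (D.partySize _ : ℝ) * (_ + 1 - n / D.partySize _) = _
    field_simp
    linarith
  · have hvw : R.choice n D t ∉ D.A t v := by
      rw [hD.mem_A_iff, hv, singleton_inj]
      exact Ne.symm hwc
    rw [if_neg hwc, if_neg fun hmem => hvw hmem.1]
    field_simp
    linarith

theorem matchesFrege_of_isPerpetualConsensus (hR : IsPerpetualConsensus R tb) (hn : 0 < n) (hD : D.IsSimple) (t : ℕ) :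
    MatchesFrege R n D t := by
  induction t with
  | zero =>
    intro v c _
    rw [consensusWeight, fregeWeight_zero]
    field_simp
  | succ t ih => exact ih.succ hR hn hD

end Consensus

theorem perpetualConsensus_coincides_with_frege_general
    (R : PerpetualRule) (tb : ℕ → ℕ → Prop)
    (hR : IsPerpetualConsensus R tb)
    (n : ℕ) (hn : 0 < n) (D : DecisionSeq n) (hD : D.IsSimple) :
    (∀ (t : ℕ) (v : Fin n) (c : ℕ), D.A 0 v = {c} →
      ((Finset.univ.filter fun u : Fin n => D.A 0 u = {c}).card : ℝ) *
          consensusWeight R n D t v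
        = (n : ℝ) * fregeWeight R n D t c) ∧
    (∀ t : ℕ, ∀ c ∈ D.C 0,
      fregeWeight R n D t c ≤ fregeWeight R n D t (R.choice n D t)) ∧
    (∀ t : ℕ, ∀ c ∈ D.C 0,
      fregeWeight R n D t c = fregeWeight R n D t (R.choice n D t) →
        tb (R.choice n D t) c) :=
  have h := matchesFrege_of_isPerpetualConsensus hR hn hD
  ⟨fun t => h t,
    fun t => (fregeWeight_choice_pos_and_le hR hn hD (h t)).2,
    fun t _ hc => tb_choice_of_fregeWeight_eq hR hD (h t) hc⟩

/-- On simple decision sequences Perpetual Consensus coincides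
with Frege's apportionment method: `|N(c)| · α_t(v) = n · s_t^c` for every voter
`v` with `A(v) = {c}`, and consequently (under the same tie-breaking) in every
round the chosen alternative is the Frege-weight-maximizing one. -/
theorem perpetualConsensus_coincides_with_frege
    (R : PerpetualRule) (tb : ℕ → ℕ → Prop) (htb : IsLinearOrder ℕ tb)
    (hR : IsPerpetualConsensus R tb)
    (n : ℕ) (hn : 0 < n) (D : DecisionSeq n) (hD : D.IsSimple) :
    (∀ (t : ℕ) (v : Fin n) (c : ℕ), D.A 0 v = {c} →
      ((Finset.univ.filter fun u : Fin n => D.A 0 u = {c}).card : ℝ) *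
          consensusWeight R n D t v
        = (n : ℝ) * fregeWeight R n D t c) ∧
    (∀ t : ℕ, ∀ c ∈ D.C 0,
      fregeWeight R n D t c ≤ fregeWeight R n D t (R.choice n D t)) ∧
    (∀ t : ℕ, ∀ c ∈ D.C 0,
      fregeWeight R n D t c = fregeWeight R n D t (R.choice n D t) →
        tb (R.choice n D t) c) :=
  perpetualConsensus_coincides_with_frege_general R tb hR n hn D hD
end
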